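/- Layerwise sandwich bound for L layers: let z^{(ℓ)} be the Deep-LSE recursion with nonnegative skips α^{(ℓ)}, and let z̄^{(ℓ)} be the corresponding max-affine recursion (replacing every LSE_{T_ℓ} by the pointwise maximum). Then for every ℓ and every x, z̄^{(ℓ)}(x) ≤ z^{(ℓ)}(x) ≤ z̄^{(ℓ)}(x) + Δ_ℓ, where Δ_1 = T_1 log K_1 and Δ_ℓ = T_ℓ log K_ℓ + α_max^{(ℓ)} Δ_{ℓ−1} with α_max^{(ℓ)} = max_k α_k^{(ℓ)}. -/

import Mathlib

/-! Induction on the layer. Each `LSE_T` over `m` terms lies between the maximum and the maximum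
plus `T log m`; since the skip weights are nonnegative, an error of at most `Δ` in the previous
layer's output moves every affine piece of the next layer up by at most `(max_k α_k) Δ`. -/

open Finset

noncomputable def LSE {m : ℕ} (T : ℝ) (u : Fin m → ℝ) : ℝ :=
  T * Real.log (∑ i, Real.exp (u i / T))

/-- Deep-LSE recursion with widths `K ℓ + 1` (so every layer is nonempty). -/
noncomputable def deepLSE (d : ℕ) (K : ℕ → ℕ) (T : ℕ → ℝ)
    (A : (ℓ : ℕ) → Fin (K ℓ + 1) → Fin d → ℝ) (b : (ℓ : ℕ) → Fin (K ℓ + 1) → ℝ)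
    (α : (ℓ : ℕ) → Fin (K ℓ + 1) → ℝ) : ℕ → (Fin d → ℝ) → ℝ
  | 0 => fun x => LSE (T 0) (fun k => ∑ j, A 0 k j * x j + b 0 k)
  | (ℓ + 1) => fun x => LSE (T (ℓ + 1)) (fun k =>
      α (ℓ + 1) k * deepLSE d K T A b α ℓ x + ∑ j, A (ℓ + 1) k j * x j + b (ℓ + 1) k)

/-- Max-affine surrogate recursion (every `LSE` replaced by a pointwise maximum). -/
noncomputable def deepMaxAffine (d : ℕ) (K : ℕ → ℕ)
    (A : (ℓ : ℕ) → Fin (K ℓ + 1) → Fin d → ℝ) (b : (ℓ : ℕ) → Fin (K ℓ + 1) → ℝ)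
    (α : (ℓ : ℕ) → Fin (K ℓ + 1) → ℝ) : ℕ → (Fin d → ℝ) → ℝ
  | 0 => fun x => univ.sup' univ_nonempty (fun k => ∑ j, A 0 k j * x j + b 0 k)
  | (ℓ + 1) => fun x => univ.sup' univ_nonempty (fun k =>
      α (ℓ + 1) k * deepMaxAffine d K A b α ℓ x + ∑ j, A (ℓ + 1) k j * x j + b (ℓ + 1) k)

/-- Accumulated slack: `Δ₀ = T₀ log K₀` and `Δ_{ℓ+1} = T_{ℓ+1} log K_{ℓ+1} + α_max Δ_ℓ`. -/
noncomputable def slack (K : ℕ → ℕ) (T : ℕ → ℝ)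
    (α : (ℓ : ℕ) → Fin (K ℓ + 1) → ℝ) : ℕ → ℝ
  | 0 => T 0 * Real.log (K 0 + 1)
  | (ℓ + 1) => T (ℓ + 1) * Real.log (K (ℓ + 1) + 1)
      + (univ.sup' univ_nonempty (α (ℓ + 1))) * slack K T α ℓ

lemma sup'_le_LSE {m : ℕ} [NeZero m] {T : ℝ} (hT : 0 < T) (u : Fin m → ℝ) :
    univ.sup' univ_nonempty u ≤ LSE T u := by
  have hS : 0 < ∑ i, Real.exp (u i / T) := sum_pos (fun i _ ↦ Real.exp_pos _) univ_nonempty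
  refine sup'_le _ _ fun i _ ↦ (div_le_iff₀' hT).1 ?_
  rw [Real.le_log_iff_exp_le hS]
  exact single_le_sum (f := fun j ↦ Real.exp (u j / T)) (fun j _ ↦ (Real.exp_pos _).le) (mem_univ i)

lemma LSE_le_sup'_add {m : ℕ} [NeZero m] {T : ℝ} (hT : 0 < T) (u : Fin m → ℝ) :
    LSE T u ≤ univ.sup' univ_nonempty u + T * Real.log m := by
  set M := univ.sup' univ_nonempty u
  have hS : 0 < ∑ i, Real.exp (u i / T) := sum_pos (fun i _ ↦ Real.exp_pos _) univ_nonempty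
  have hm : (0 : ℝ) < m := by exact_mod_cast Nat.pos_of_ne_zero (NeZero.ne m)
  have hsum : ∑ i, Real.exp (u i / T) ≤ m * Real.exp (M / T) := by
    calc ∑ i, Real.exp (u i / T) ≤ ∑ _i : Fin m, Real.exp (M / T) :=
          sum_le_sum fun i _ ↦ Real.exp_le_exp.2 <|
            div_le_div_of_nonneg_right (le_sup' u (mem_univ i)) hT.le
      _ = m * Real.exp (M / T) := by simp
  have hlog : Real.log (∑ i, Real.exp (u i / T)) ≤ M / T + Real.log m := by
    rw [Real.log_le_iff_le_exp hS, Real.exp_add, Real.exp_log hm, mul_comm]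
    exact hsum
  calc LSE T u ≤ T * (M / T + Real.log m) := mul_le_mul_of_nonneg_left hlog hT.le
    _ = M + T * Real.log m := by field_simp

lemma LSE_skip_layer_sandwich {m : ℕ} [NeZero m] {T : ℝ} (hT : 0 < T) {a : Fin m → ℝ}
    (ha : ∀ k, 0 ≤ a k) (c : Fin m → ℝ) {y z Δ : ℝ} (hlo : y ≤ z) (hhi : z ≤ y + Δ)
    (hΔ : 0 ≤ Δ) :
    univ.sup' univ_nonempty (fun k ↦ a k * y + c k) ≤ LSE T (fun k ↦ a k * z + c k) ∧
      LSE T (fun k ↦ a k * z + c k) ≤ univ.sup' univ_nonempty (fun k ↦ a k * y + c k)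
        + (T * Real.log m + univ.sup' univ_nonempty a * Δ) := by
  set g := fun k ↦ a k * y + c k
  set u := fun k ↦ a k * z + c k
  have hgu : ∀ k ∈ univ, g k ≤ u k := fun k _ ↦ by
    simpa [g, u] using mul_le_mul_of_nonneg_left hlo (ha k)
  have hug : ∀ k ∈ univ, u k ≤ g k + univ.sup' univ_nonempty a * Δ := fun k _ ↦ by
    have h₁ := mul_le_mul_of_nonneg_left hhi (ha k)
    have h₂ := mul_le_mul_of_nonneg_right (le_sup' a (mem_univ k)) hΔ
    simp only [g, u]
    linarith
  constructor
  · exact (sup'_mono_fun hgu).trans (sup'_le_LSE hT u)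
  · calc LSE T u ≤ univ.sup' univ_nonempty u + T * Real.log m := LSE_le_sup'_add hT u
      _ ≤ univ.sup' univ_nonempty g + univ.sup' univ_nonempty a * Δ + T * Real.log m := by
          grw [sup'_mono_fun hug, ← sup'_add]
      _ = _ := by ring

lemma slack_nonneg (K : ℕ → ℕ) {T : ℕ → ℝ} (hT : ∀ ℓ, 0 < T ℓ)
    {α : (ℓ : ℕ) → Fin (K ℓ + 1) → ℝ} (hα : ∀ ℓ k, 0 ≤ α ℓ k) (ℓ : ℕ) :
    0 ≤ slack K T α ℓ := by
  have hlog : ∀ n, 0 ≤ T n * Real.log (K n + 1) := fun n ↦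
    mul_nonneg (hT n).le (Real.log_nonneg (by linarith [(K n).cast_nonneg (α := ℝ)]))
  induction ℓ with
  | zero => exact hlog 0
  | succ n ih =>
    have hαmax : 0 ≤ univ.sup' univ_nonempty (α (n + 1)) := (hα _ 0).trans (le_sup' _ (mem_univ 0))
    exact add_nonneg (hlog _) (mul_nonneg hαmax ih)

/-- Layerwise sandwich bound for the `L`-layer Deep-LSE:
`z̄⁽ℓ⁾(x) ≤ z⁽ℓ⁾(x) ≤ z̄⁽ℓ⁾(x) + Δ_ℓ` for every layer `ℓ` and every `x`. -/
theorem deepLSE_sandwich (d : ℕ) (K : ℕ → ℕ) (T : ℕ → ℝ) (hT : ∀ ℓ, 0 < T ℓ)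
    (A : (ℓ : ℕ) → Fin (K ℓ + 1) → Fin d → ℝ) (b : (ℓ : ℕ) → Fin (K ℓ + 1) → ℝ)
    (α : (ℓ : ℕ) → Fin (K ℓ + 1) → ℝ) (hα : ∀ ℓ k, 0 ≤ α ℓ k) (ℓ : ℕ) (x : Fin d → ℝ) :
    deepMaxAffine d K A b α ℓ x ≤ deepLSE d K T A b α ℓ x ∧
      deepLSE d K T A b α ℓ x ≤ deepMaxAffine d K A b α ℓ x + slack K T α ℓ := by
  induction ℓ with
  | zero =>
    have hhi := LSE_le_sup'_add (hT 0) (fun k ↦ ∑ j, A 0 k j * x j + b 0 k)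
    push_cast at hhi
    exact ⟨sup'_le_LSE (hT 0) _, hhi⟩
  | succ n ih =>
    have hlayer := LSE_skip_layer_sandwich (hT (n + 1)) (hα (n + 1))
      (fun k ↦ ∑ j, A (n + 1) k j * x j + b (n + 1) k) ih.1 ih.2 (slack_nonneg K hT hα n)
    push_cast at hlayer
    simpa only [deepLSE, deepMaxAffine, slack, add_assoc] using hlayer
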